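/- arXiv:0912.5296 — 10 statements merged into one kernel-verified Lean document; each statement's English description precedes it below -/
import Mathlib

section
/- Let a, b, c : ℝ × ℝ → ℝ be continuous functions of (x, t). Suppose P : ℝ × ℝ → ℝ is continuously differentiable with P > 0, Pₓ(x,t) = 2·a(x,t)·P(x,t) and P_t(x,t) = b(x,t)·P(x,t) for all (x,t); let Q : ℝ × ℝ → ℝ be any continuously differentiable function, and let R : ℝ × ℝ → ℝ be differentiable in x with Rₓ(x,t) = Q_t(x,t) − c(x,t)·P(x,t). Then a twice differentiable curve x : ℝ → ℝ satisfies the Euler–Lagrange equation of the standard Lagrangian L(x, v, t) = (1/2)·P(x,t)·v² + Q(x,t)·v + R(x,t) if and only if x''(t) + a(x(t),t)·x'(t)² + b(x(t),t)·x'(t) + c(x(t),t) = 0 for all t ∈ ℝ. (This is the constructive content of the condition bₓ = 2a_t for the existence of a standard Lagrangian.) -/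
/-- Partial derivative of the Lagrangian `L x v t` in the velocity argument. -/
noncomputable def pv (L : ℝ → ℝ → ℝ → ℝ) (x v t : ℝ) : ℝ := deriv (fun w => L x w t) v

/-- Partial derivative of the Lagrangian `L x v t` in the position argument. -/
noncomputable def px (L : ℝ → ℝ → ℝ → ℝ) (x v t : ℝ) : ℝ := deriv (fun y => L y v t) x

/-- A curve `x` satisfies the Euler–Lagrange equation of `L`:
`(d/dt)[(∂L/∂v)(x t, x' t, t)] = (∂L/∂x)(x t, x' t, t)` for all `t`. -/
def SatisfiesEL (L : ℝ → ℝ → ℝ → ℝ) (x : ℝ → ℝ) : Prop :=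
  ∀ t : ℝ, deriv (fun s => pv L (x s) (deriv x s) s) t = px L (x t) (deriv x t) t

/-- Partial derivative of `f (x, t)` in the first argument. -/
noncomputable def pd1 (f : ℝ × ℝ → ℝ) (x t : ℝ) : ℝ := deriv (fun y => f (y, t)) x

/-- Partial derivative of `f (x, t)` in the second argument. -/
noncomputable def pd2 (f : ℝ × ℝ → ℝ) (x t : ℝ) : ℝ := deriv (fun s => f (x, s)) t

/-!
For the standard Lagrangian, `∂L/∂v = P v + Q`, so along a curve the Euler–Lagrange residual is
`d/dt (∂L/∂v) - ∂L/∂x = P x'' + (Pₓ x' + P_t) x' + Qₓ x' + Q_t - (½ Pₓ x'² + Qₓ x' + Rₓ)`.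
The `Qₓ x'` terms cancel, and with `Pₓ = 2aP`, `P_t = bP`, `Rₓ = Q_t - cP` the residual is
`P · (x'' + a x'² + b x' + c)`. Since `P > 0`, the two equations have the same solutions.
-/

section PartialDerivatives

variable {f : ℝ × ℝ → ℝ} {X t : ℝ}

theorem hasDerivAt_pd1 (hf : DifferentiableAt ℝ f (X, t)) :
    HasDerivAt (fun y => f (y, t)) (pd1 f X t) X :=
  (hf.comp X (differentiableAt_id.prodMk (differentiableAt_const t))).hasDerivAt

theorem pd1_eq_fderiv (hf : DifferentiableAt ℝ f (X, t)) :
    pd1 f X t = fderiv ℝ f (X, t) (1, 0) :=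
  (hf.hasFDerivAt.comp_hasDerivAt X ((hasDerivAt_id X).prodMk (hasDerivAt_const X t))).deriv

theorem pd2_eq_fderiv (hf : DifferentiableAt ℝ f (X, t)) :
    pd2 f X t = fderiv ℝ f (X, t) (0, 1) :=
  (hf.hasFDerivAt.comp_hasDerivAt t ((hasDerivAt_const t X).prodMk (hasDerivAt_id t))).deriv

theorem hasDerivAt_comp_graph {x : ℝ → ℝ} (hf : DifferentiableAt ℝ f (x t, t))
    (hx : DifferentiableAt ℝ x t) :
    HasDerivAt (fun s => f (x s, s)) (pd1 f (x t) t * deriv x t + pd2 f (x t) t) t := by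
  have h := hf.hasFDerivAt.comp_hasDerivAt (f := fun s => (x s, s)) t
    (hx.hasDerivAt.prodMk (hasDerivAt_id t))
  have hdir : (deriv x t, (1 : ℝ)) = deriv x t • ((1 : ℝ), (0 : ℝ)) + ((0 : ℝ), (1 : ℝ)) := by
    simp
  rwa [hdir, map_add, map_smul, ← pd1_eq_fderiv hf, ← pd2_eq_fderiv hf, smul_eq_mul,
    mul_comm] at h

end PartialDerivatives

def IsStandardLagrangian (L : ℝ → ℝ → ℝ → ℝ) (P Q R : ℝ × ℝ → ℝ) : Prop :=
  ∀ x v t, L x v t = (1/2) * P (x, t) * v ^ 2 + Q (x, t) * v + R (x, t)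

section StandardLagrangian

variable {P Q R : ℝ × ℝ → ℝ} {L : ℝ → ℝ → ℝ → ℝ}

theorem IsStandardLagrangian.pv_eq (hL : IsStandardLagrangian L P Q R) (X v t : ℝ) :
    pv L X v t = P (X, t) * v + Q (X, t) := by
  have h := (((hasDerivAt_pow 2 v).const_mul ((1/2) * P (X, t))).add
    ((hasDerivAt_id v).const_mul (Q (X, t)))).add_const (R (X, t))
  simp only [pv, hL _ _ _]
  exact h.deriv.trans (by simp; ring)

theorem IsStandardLagrangian.px_eq (hL : IsStandardLagrangian L P Q R) {X v t r : ℝ}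
    (hP : DifferentiableAt ℝ P (X, t)) (hQ : DifferentiableAt ℝ Q (X, t))
    (hR : HasDerivAt (fun y => R (y, t)) r X) :
    px L X v t = (1/2) * pd1 P X t * v ^ 2 + pd1 Q X t * v + r := by
  have h := ((((hasDerivAt_pd1 hP).const_mul (1/2)).mul_const (v ^ 2)).add
    ((hasDerivAt_pd1 hQ).mul_const v)).add hR
  simp only [px, hL _ _ _]
  exact h.deriv

theorem IsStandardLagrangian.hasDerivAt_pv_comp (hL : IsStandardLagrangian L P Q R)
    {x : ℝ → ℝ} {t : ℝ} (hP : DifferentiableAt ℝ P (x t, t))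
    (hQ : DifferentiableAt ℝ Q (x t, t)) (hx : DifferentiableAt ℝ x t)
    (hx' : DifferentiableAt ℝ (deriv x) t) :
    HasDerivAt (fun s => pv L (x s) (deriv x s) s)
      ((pd1 P (x t) t * deriv x t + pd2 P (x t) t) * deriv x t + P (x t, t) * deriv (deriv x) t
        + (pd1 Q (x t) t * deriv x t + pd2 Q (x t) t)) t := by
  simp only [hL.pv_eq]
  exact ((hasDerivAt_comp_graph hP hx).mul hx'.hasDerivAt).add (hasDerivAt_comp_graph hQ hx)

end StandardLagrangian

theorem standard_lagrangian_for_abc_equation_general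
    (a b c : ℝ × ℝ → ℝ)
    (P : ℝ × ℝ → ℝ) (hP : ContDiff ℝ 1 P) (hPpos : ∀ x t : ℝ, 0 < P (x, t))
    (hPx : ∀ x t : ℝ, pd1 P x t = 2 * a (x, t) * P (x, t))
    (hPt : ∀ x t : ℝ, pd2 P x t = b (x, t) * P (x, t))
    (Q : ℝ × ℝ → ℝ) (hQ : ContDiff ℝ 1 Q)
    (R : ℝ × ℝ → ℝ)
    (hR : ∀ x t : ℝ, HasDerivAt (fun y => R (y, t)) (pd2 Q x t - c (x, t) * P (x, t)) x)
    (L : ℝ → ℝ → ℝ → ℝ)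
    (hL : ∀ x v t : ℝ, L x v t = (1/2) * P (x, t) * v ^ 2 + Q (x, t) * v + R (x, t))
    (x : ℝ → ℝ) (hx : Differentiable ℝ x) (hx' : Differentiable ℝ (deriv x)) :
    SatisfiesEL L x ↔
      ∀ t : ℝ, deriv (deriv x) t + a (x t, t) * (deriv x t) ^ 2
        + b (x t, t) * deriv x t + c (x t, t) = 0 := by
  have hPd := hP.differentiable one_ne_zero
  have hQd := hQ.differentiable one_ne_zero
  have hstd : IsStandardLagrangian L P Q R := hL
  have residual : ∀ t, deriv (fun s => pv L (x s) (deriv x s) s) t - px L (x t) (deriv x t) t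
      = P (x t, t) * (deriv (deriv x) t + a (x t, t) * (deriv x t) ^ 2
          + b (x t, t) * deriv x t + c (x t, t)) := by
    intro t
    rw [(hstd.hasDerivAt_pv_comp (hPd _) (hQd _) (hx t) (hx' t)).deriv,
      hstd.px_eq (hPd _) (hQd _) (hR _ _), hPx, hPt]
    ring
  refine forall_congr' fun t => ?_
  rw [← sub_eq_zero, residual, mul_eq_zero_iff_left (hPpos _ _).ne']

theorem standard_lagrangian_for_abc_equation
    (a b c : ℝ × ℝ → ℝ) (ha : Continuous a) (hb : Continuous b) (hc : Continuous c)
    (P : ℝ × ℝ → ℝ) (hP : ContDiff ℝ 1 P) (hPpos : ∀ x t : ℝ, 0 < P (x, t))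
    (hPx : ∀ x t : ℝ, pd1 P x t = 2 * a (x, t) * P (x, t))
    (hPt : ∀ x t : ℝ, pd2 P x t = b (x, t) * P (x, t))
    (Q : ℝ × ℝ → ℝ) (hQ : ContDiff ℝ 1 Q)
    (R : ℝ × ℝ → ℝ)
    (hR : ∀ x t : ℝ, HasDerivAt (fun y => R (y, t)) (pd2 Q x t - c (x, t) * P (x, t)) x)
    (L : ℝ → ℝ → ℝ → ℝ)
    (hL : ∀ x v t : ℝ, L x v t = (1/2) * P (x, t) * v ^ 2 + Q (x, t) * v + R (x, t))
    (x : ℝ → ℝ) (hx : Differentiable ℝ x) (hx' : Differentiable ℝ (deriv x)) :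
    SatisfiesEL L x ↔
      ∀ t : ℝ, deriv (deriv x) t + a (x t, t) * (deriv x t) ^ 2
        + b (x t, t) * deriv x t + c (x t, t) = 0 :=
  standard_lagrangian_for_abc_equation_general a b c P hP hPpos hPx hPt Q hQ R hR L hL x hx hx'
end

section
/- Let b : ℝ → ℝ be continuous and let c : ℝ × ℝ → ℝ be a continuous function of (x, t). Define B(t) = exp(∫₀ᵗ b(τ) dτ) and V(x, t) = ∫₀ˣ c(ξ, t) dξ, and the Lagrangian L(x, v, t) = B(t)·((1/2)·v² − V(x, t)). Then a twice differentiable curve x : ℝ → ℝ satisfies the Euler–Lagrange equation of L if and only if x''(t) + b(t)·x'(t) + c(x(t), t) = 0 for all t ∈ ℝ. -/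
section KineticMinusPotential

variable {L : ℝ → ℝ → ℝ → ℝ} {B : ℝ → ℝ} {V : ℝ → ℝ → ℝ}

theorem pv_eq_mul_velocity (hL : ∀ x v t, L x v t = B t * ((1 / 2) * v ^ 2 - V x t))
    (x v t : ℝ) : pv L x v t = B t * v := by
  have h : HasDerivAt (fun w => B t * ((1 / 2) * w ^ 2 - V x t)) (B t * v) v := by
    simpa using (((hasDerivAt_pow 2 v).const_mul (1 / 2 : ℝ)).sub_const (V x t)).const_mul (B t)
  simp only [pv, hL, h.deriv]

/-- This holds even where `V` is not differentiable in `x`, both sides then being `0`. -/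
theorem px_eq_neg_mul_deriv_potential
    (hL : ∀ x v t, L x v t = B t * ((1 / 2) * v ^ 2 - V x t)) (x v t : ℝ) :
    px L x v t = -(B t * deriv (fun y => V y t) x) := by
  simp only [px, hL, deriv_const_mul_field', deriv_const_sub, mul_neg]

theorem satisfiesEL_iff_of_hasDerivAt {b : ℝ → ℝ}
    (hL : ∀ x v t, L x v t = B t * ((1 / 2) * v ^ 2 - V x t))
    (hB : ∀ t, HasDerivAt B (B t * b t) t) (hB₀ : ∀ t, B t ≠ 0)
    {x : ℝ → ℝ} (hx' : Differentiable ℝ (deriv x)) :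
    SatisfiesEL L x ↔
      ∀ t, deriv (deriv x) t + b t * deriv x t + deriv (fun y => V y t) (x t) = 0 := by
  have hmomentum : (fun s => pv L (x s) (deriv x s) s) = fun s => B s * deriv x s :=
    funext fun s => pv_eq_mul_velocity hL _ _ _
  refine forall_congr' fun t => ?_
  rw [hmomentum, ((hB t).fun_mul (hx' t).hasDerivAt).deriv, px_eq_neg_mul_deriv_potential hL]
  constructor
  · intro h
    exact mul_left_cancel₀ (hB₀ t) (by linear_combination h)
  · intro h
    linear_combination B t * h

end KineticMinusPotential

theorem standard_lagrangian_time_damping_general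
    (b : ℝ → ℝ) (hb : Continuous b) (c : ℝ × ℝ → ℝ) (hc : Continuous c)
    (B : ℝ → ℝ) (hB : ∀ t : ℝ, B t = Real.exp (∫ τ in (0:ℝ)..t, b τ))
    (V : ℝ → ℝ → ℝ) (hV : ∀ x t : ℝ, V x t = ∫ ξ in (0:ℝ)..x, c (ξ, t))
    (L : ℝ → ℝ → ℝ → ℝ)
    (hL : ∀ x v t : ℝ, L x v t = B t * ((1/2) * v ^ 2 - V x t))
    (x : ℝ → ℝ) (hx' : Differentiable ℝ (deriv x)) :
    SatisfiesEL L x ↔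
      ∀ t : ℝ, deriv (deriv x) t + b t * deriv x t + c (x t, t) = 0 := by
  obtain rfl : B = _ := funext hB
  obtain rfl : V = _ := funext₂ hV
  have hB_deriv (t : ℝ) : HasDerivAt (fun u => Real.exp (∫ τ in (0:ℝ)..u, b τ))
      (Real.exp (∫ τ in (0:ℝ)..t, b τ) * b t) t :=
    (hb.integral_hasStrictDerivAt 0 t).hasDerivAt.exp
  have hV_deriv (X t : ℝ) : deriv (fun y => ∫ ξ in (0:ℝ)..y, c (ξ, t)) X = c (X, t) :=
    Continuous.deriv_integral _ (hc.comp (continuous_id.prodMk continuous_const)) 0 X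
  rw [satisfiesEL_iff_of_hasDerivAt hL hB_deriv (fun t => (Real.exp_pos _).ne') hx']
  simp only [hV_deriv]

theorem standard_lagrangian_time_damping
    (b : ℝ → ℝ) (hb : Continuous b) (c : ℝ × ℝ → ℝ) (hc : Continuous c)
    (B : ℝ → ℝ) (hB : ∀ t : ℝ, B t = Real.exp (∫ τ in (0:ℝ)..t, b τ))
    (V : ℝ → ℝ → ℝ) (hV : ∀ x t : ℝ, V x t = ∫ ξ in (0:ℝ)..x, c (ξ, t))
    (L : ℝ → ℝ → ℝ → ℝ)
    (hL : ∀ x v t : ℝ, L x v t = B t * ((1/2) * v ^ 2 - V x t))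
    (x : ℝ → ℝ) (hx : Differentiable ℝ x) (hx' : Differentiable ℝ (deriv x)) :
    SatisfiesEL L x ↔
      ∀ t : ℝ, deriv (deriv x) t + b t * deriv x t + c (x t, t) = 0 :=
  standard_lagrangian_time_damping_general b hb c hc B hB V hV L hL x hx'
end

section
/- Let a : ℝ → ℝ be continuous and let c : ℝ × ℝ → ℝ be a continuous function of (x, t). Define A(x) = exp(2·∫₀ˣ a(ξ) dξ) and the Lagrangian L(x, v, t) = (1/2)·v²·A(x) − ∫₀ˣ c(ξ, t)·A(ξ) dξ. Then a twice differentiable curve x : ℝ → ℝ satisfies the Euler–Lagrange equation of L if and only if x''(t) + a(x(t))·x'(t)² + c(x(t), t) = 0 for all t ∈ ℝ. -/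
theorem standard_lagrangian_quadratic_velocity_Q_zero
    (a : ℝ → ℝ) (ha : Continuous a)
    (c : ℝ × ℝ → ℝ) (hc : Continuous c)
    (A : ℝ → ℝ) (hA : ∀ x : ℝ, A x = Real.exp (2 * ∫ ξ in (0:ℝ)..x, a ξ))
    (L : ℝ → ℝ → ℝ → ℝ)
    (hL : ∀ x v t : ℝ, L x v t = (1/2) * v ^ 2 * A x - ∫ ξ in (0:ℝ)..x, c (ξ, t) * A ξ)
    (x : ℝ → ℝ) (hx : Differentiable ℝ x) (hx' : Differentiable ℝ (deriv x)) :
    SatisfiesEL L x ↔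
      ∀ t : ℝ, deriv (deriv x) t + a (x t) * (deriv x t) ^ 2 + c (x t, t) = 0 := by
  -- A has derivative 2 a x * A x
  have hAdiff : ∀ y : ℝ, HasDerivAt A (2 * a y * A y) y := by
    intro y
    have hF : HasDerivAt (fun u => ∫ ξ in (0:ℝ)..u, a ξ) (a y) y :=
      (ha.integral_hasStrictDerivAt 0 y).hasDerivAt
    have : HasDerivAt (fun u => Real.exp (2 * ∫ ξ in (0:ℝ)..u, a ξ))
        (Real.exp (2 * ∫ ξ in (0:ℝ)..y, a ξ) * (2 * a y)) y :=
      (hF.const_mul 2).exp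
    have heq : A = fun u => Real.exp (2 * ∫ ξ in (0:ℝ)..u, a ξ) := funext hA
    rw [heq]
    convert this using 1
    rw [← heq, hA y]; ring
  have hAcont : Continuous A := by
    have heq : A = fun u => Real.exp (2 * ∫ ξ in (0:ℝ)..u, a ξ) := funext hA
    exact continuous_iff_continuousAt.mpr fun y => (hAdiff y).continuousAt
  have hApos : ∀ y : ℝ, 0 < A y := fun y => (hA y) ▸ Real.exp_pos _
  -- pv formula
  have hpv : ∀ y v t : ℝ, pv L y v t = v * A y := by
    intro y v t
    have h1 : HasDerivAt (fun w : ℝ => L y w t) (v * A y) v := by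
      have : HasDerivAt (fun w : ℝ => (1/2) * w ^ 2 * A y -
          ∫ ξ in (0:ℝ)..y, c (ξ, t) * A ξ) ((1/2) * (2 * v ^ 1) * A y) v :=
        (((hasDerivAt_pow 2 v).const_mul (1/2)).mul_const (A y)).sub_const _
      have heq : (fun w : ℝ => L y w t) = fun w : ℝ =>
          (1/2) * w ^ 2 * A y - ∫ ξ in (0:ℝ)..y, c (ξ, t) * A ξ := funext fun w => hL y w t
      rw [heq]
      convert this using 1; ring
    exact h1.deriv
  -- px formula
  have hpx : ∀ y v t : ℝ, px L y v t = a y * v ^ 2 * A y - c (y, t) * A y := by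
    intro y v t
    have hcA : Continuous (fun ξ => c (ξ, t) * A ξ) :=
      (hc.comp (continuous_id.prodMk continuous_const)).mul hAcont
    have h2 : HasDerivAt (fun u => ∫ ξ in (0:ℝ)..u, c (ξ, t) * A ξ) (c (y, t) * A y) y :=
      (hcA.integral_hasStrictDerivAt 0 y).hasDerivAt
    have h1 : HasDerivAt (fun z : ℝ => (1/2) * v ^ 2 * A z -
        ∫ ξ in (0:ℝ)..z, c (ξ, t) * A ξ)
        ((1/2) * v ^ 2 * (2 * a y * A y) - c (y, t) * A y) y :=
      ((hAdiff y).const_mul ((1/2) * v ^ 2)).sub h2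
    have heq : (fun z : ℝ => L z v t) = fun z : ℝ =>
        (1/2) * v ^ 2 * A z - ∫ ξ in (0:ℝ)..z, c (ξ, t) * A ξ := funext fun z => hL z v t
    unfold px
    rw [heq, h1.deriv]; ring
  -- derivative of t ↦ pv L (x t) (x' t) t
  have hLHS : ∀ t : ℝ, deriv (fun s => pv L (x s) (deriv x s) s) t =
      deriv (deriv x) t * A (x t) + deriv x t * (2 * a (x t) * A (x t) * deriv x t) := by
    intro t
    have heq : (fun s => pv L (x s) (deriv x s) s) = fun s => deriv x s * A (x s) :=
      funext fun s => hpv (x s) (deriv x s) s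
    have hAx : HasDerivAt (fun s => A (x s)) (2 * a (x t) * A (x t) * deriv x t) t :=
      (hAdiff (x t)).comp t (hx t).hasDerivAt
    have h : HasDerivAt (fun s => deriv x s * A (x s))
        (deriv (deriv x) t * A (x t) + deriv x t * (2 * a (x t) * A (x t) * deriv x t)) t :=
      (hx' t).hasDerivAt.mul hAx
    rw [heq, h.deriv]
  constructor
  · intro h t
    have ht := h t
    rw [hLHS t, hpx] at ht
    have hAne : A (x t) ≠ 0 := (hApos (x t)).ne'
    have : (deriv (deriv x) t + a (x t) * (deriv x t) ^ 2 + c (x t, t)) * A (x t) = 0 := by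
      linear_combination ht
    exact (mul_eq_zero.mp this).resolve_right hAne
  · intro h t
    rw [hLHS t, hpx]
    linear_combination A (x t) * h t
end

section
/- Let a, b, c : ℝ → ℝ be continuously differentiable with b(x) ≠ 0 for all x, and suppose c satisfies the constraint c'(x) + (a(x) − b'(x)/b(x))·c(x) = (2/9)·b(x)² for all x. Define F(x) = exp(∫₀ˣ a(ξ) dξ), G(x) = 3·c(x)·F(x)/b(x), and the reciprocal Lagrangian L(x, v, t) = 1/(F(x)·v + G(x)). Then a twice differentiable curve x : ℝ → ℝ with F(x(t))·x'(t) + G(x(t)) ≠ 0 for all t satisfies the Euler–Lagrange equation of L if and only if x''(t) + a(x(t))·x'(t)² + b(x(t))·x'(t) + c(x(t)) = 0 for all t ∈ ℝ. -/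
/-!
Along a curve put `D = F(x) x' + G(x)`. For `L = 1 / D` one has `∂L/∂v = -F/D²` and
`∂L/∂x = -(F' x' + G')/D²`, so after multiplying by `D³` the Euler–Lagrange equation becomes
`2 F² x'' + 2 F F' x'² + 3 F G' x' + G G' = 0`. With `F = exp ∫ a` we have `F' = a F`, and the
constraint on `c` is exactly what makes `G = 3 c F / b` satisfy `G' = (2/3) F b`; the left-hand side
then collapses to `2 F² (x'' + a x'² + b x' + c)`, and `F > 0`.
-/

theorem hasDerivAt_exp_integral {a : ℝ → ℝ} (ha : Continuous a) (y : ℝ) :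
    HasDerivAt (fun u => Real.exp (∫ ξ in (0:ℝ)..u, a ξ))
      (a y * Real.exp (∫ ξ in (0:ℝ)..y, a ξ)) y := by
  have hint : HasDerivAt (fun u => ∫ ξ in (0:ℝ)..u, a ξ) (a y) y :=
    intervalIntegral.integral_hasDerivAt_right (ha.intervalIntegrable _ _)
      (ha.stronglyMeasurableAtFilter _ _) ha.continuousAt
  simpa only [mul_comm] using hint.exp

theorem hasDerivAt_three_mul_mul_div {a b c F : ℝ → ℝ} {y : ℝ}
    (hF : HasDerivAt F (a y * F y) y) (hb : DifferentiableAt ℝ b y)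
    (hc : DifferentiableAt ℝ c y) (hby : b y ≠ 0)
    (hconstraint : deriv c y + (a y - deriv b y / b y) * c y = (2/9) * (b y) ^ 2) :
    HasDerivAt (fun u => 3 * c u * F u / b u) (2/3 * F y * b y) y := by
  refine (((hc.hasDerivAt.const_mul 3).mul hF).div hb.hasDerivAt hby).congr_deriv ?_
  have hb' : deriv b y / b y * b y = deriv b y := div_mul_cancel₀ _ hby
  rw [Pi.mul_apply, div_eq_iff (pow_ne_zero 2 hby)]
  linear_combination 3 * F y * b y * hconstraint + 3 * F y * c y * hb'

theorem pv_one_div_linear (F G : ℝ → ℝ) {X V : ℝ} (t : ℝ) (hD : F X * V + G X ≠ 0) :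
    pv (fun y v _ => 1 / (F y * v + G y)) X V t = -F X / (F X * V + G X) ^ 2 := by
  have hlin : HasDerivAt (fun w => F X * w + G X) (F X) V := by
    simpa using ((hasDerivAt_id V).const_mul (F X)).add_const (G X)
  simp only [pv, one_div]
  exact (hlin.inv hD).deriv

theorem px_one_div_linear {F G : ℝ → ℝ} {F' G' X : ℝ} (hF : HasDerivAt F F' X)
    (hG : HasDerivAt G G' X) {V : ℝ} (t : ℝ) (hD : F X * V + G X ≠ 0) :
    px (fun y v _ => 1 / (F y * v + G y)) X V t = -(F' * V + G') / (F X * V + G X) ^ 2 := by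
  simp only [px, one_div]
  exact (((hF.mul_const V).add hG).inv hD).deriv

theorem satisfiesEL_one_div_linear_iff {F G F' G' : ℝ → ℝ} (hF : ∀ y, HasDerivAt F (F' y) y)
    (hG : ∀ y, HasDerivAt G (G' y) y) {x : ℝ → ℝ} (hx : Differentiable ℝ x)
    (hx' : Differentiable ℝ (deriv x)) (hne : ∀ t, F (x t) * deriv x t + G (x t) ≠ 0) :
    SatisfiesEL (fun y v _ => 1 / (F y * v + G y)) x ↔
      ∀ t, 2 * F (x t) ^ 2 * deriv (deriv x) t + 2 * F (x t) * F' (x t) * deriv x t ^ 2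
        + 3 * F (x t) * G' (x t) * deriv x t + G (x t) * G' (x t) = 0 := by
  refine forall_congr' fun t => ?_
  set X := x t
  set V := deriv x t
  set A := deriv (deriv x) t
  set D := F X * V + G X
  have hFx : HasDerivAt (fun s => F (x s)) (F' X * V) t := (hF X).comp t (hx t).hasDerivAt
  have hGx : HasDerivAt (fun s => G (x s)) (G' X * V) t := (hG X).comp t (hx t).hasDerivAt
  have hDx : HasDerivAt (fun s => F (x s) * deriv x s + G (x s))
      (F' X * V * V + F X * A + G' X * V) t :=
    ((hFx.mul (hx' t).hasDerivAt).add hGx).congr_deriv (by ring)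
  have hpv : HasDerivAt (fun s => pv (fun y v _ => 1 / (F y * v + G y)) (x s) (deriv x s) s)
      ((-(F' X * V) * D ^ 2 - -F X * (2 * D * (F' X * V * V + F X * A + G' X * V))) / (D ^ 2) ^ 2)
      t := by
    simp only [pv_one_div_linear F G _ (hne _)]
    exact hFx.neg.div ((hDx.pow 2).congr_deriv (by push_cast; ring)) (pow_ne_zero 2 (hne t))
  rw [hpv.deriv, px_one_div_linear (hF X) (hG X) t (hne t),
    div_eq_div_iff (pow_ne_zero 2 (pow_ne_zero 2 (hne t))) (pow_ne_zero 2 (hne t)), ← sub_eq_zero]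
  convert mul_eq_zero_iff_left (pow_ne_zero 3 (hne t)) using 2
  ring

theorem reciprocal_lagrangian_autonomous
    (a b c : ℝ → ℝ) (ha : ContDiff ℝ 1 a) (hb : ContDiff ℝ 1 b) (hc : ContDiff ℝ 1 c)
    (hbne : ∀ x : ℝ, b x ≠ 0)
    (hconstraint : ∀ x : ℝ,
      deriv c x + (a x - deriv b x / b x) * c x = (2/9) * (b x) ^ 2)
    (F G : ℝ → ℝ)
    (hF : ∀ x : ℝ, F x = Real.exp (∫ ξ in (0:ℝ)..x, a ξ))
    (hG : ∀ x : ℝ, G x = 3 * c x * F x / b x)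
    (L : ℝ → ℝ → ℝ → ℝ) (hL : ∀ x v t : ℝ, L x v t = 1 / (F x * v + G x))
    (x : ℝ → ℝ) (hx : Differentiable ℝ x) (hx' : Differentiable ℝ (deriv x))
    (hne : ∀ t : ℝ, F (x t) * deriv x t + G (x t) ≠ 0) :
    SatisfiesEL L x ↔
      ∀ t : ℝ, deriv (deriv x) t + a (x t) * (deriv x t) ^ 2
        + b (x t) * deriv x t + c (x t) = 0 := by
  obtain rfl : L = fun y v _ => 1 / (F y * v + G y) :=
    funext fun y => funext fun v => funext (hL y v)
  obtain rfl : G = fun u => 3 * c u * F u / b u := funext hG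
  obtain rfl : F = fun u => Real.exp (∫ ξ in (0:ℝ)..u, a ξ) := funext hF
  have hFd := hasDerivAt_exp_integral ha.continuous
  have hGd y := hasDerivAt_three_mul_mul_div (hFd y) (hb.differentiable one_ne_zero y)
    (hc.differentiable one_ne_zero y) (hbne y) (hconstraint y)
  rw [satisfiesEL_one_div_linear_iff hFd hGd hx hx' hne]
  refine forall_congr' fun t => ?_
  set E := Real.exp (∫ ξ in (0:ℝ)..x t, a ξ)
  have hE : 2 * E ^ 2 ≠ 0 := by positivity
  convert mul_eq_zero_iff_left hE using 2
  field_simp [hbne (x t)]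
end

section
/- Let a : ℝ → ℝ be continuous and b : ℝ → ℝ be continuously differentiable with b(x) ≠ 0 for all x. Define c(x) = (2/9)·b(x)·∫₀ˣ b(ξ)·exp(∫ₓ^ξ a(y) dy) dξ. Then c is differentiable and satisfies c'(x) + (a(x) − b'(x)/b(x))·c(x) = (2/9)·b(x)² for all x ∈ ℝ. -/
open Real

theorem integral_mul_exp_integral_eq {a : ℝ → ℝ} (ha : Continuous a) (f : ℝ → ℝ) (x₀ x : ℝ) :
    ∫ ξ in x₀..x, f ξ * exp (∫ y in x..ξ, a y) =
      exp (-∫ y in x₀..x, a y) * ∫ ξ in x₀..x, f ξ * exp (∫ y in x₀..ξ, a y) := by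
  rw [← intervalIntegral.integral_const_mul]
  congr 1 with ξ
  rw [← intervalIntegral.integral_interval_sub_left (ha.intervalIntegrable x₀ ξ)
    (ha.intervalIntegrable x₀ x), sub_eq_neg_add, exp_add]
  ring

theorem hasDerivAt_integral_mul_exp_integral {a f : ℝ → ℝ} (ha : Continuous a)
    (hf : Continuous f) (x₀ x : ℝ) :
    HasDerivAt (fun x => ∫ ξ in x₀..x, f ξ * exp (∫ y in x..ξ, a y))
      (f x - a x * ∫ ξ in x₀..x, f ξ * exp (∫ y in x..ξ, a y)) x := by
  set A : ℝ → ℝ := fun x => ∫ y in x₀..x, a y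
  have hA : ∀ x, HasDerivAt A (a x) x := fun x =>
    (ha.integral_hasStrictDerivAt x₀ x).hasDerivAt
  have hfA : Continuous fun ξ => f ξ * exp (A ξ) :=
    hf.mul (continuous_exp.comp (continuous_iff_continuousAt.2 fun x => (hA x).continuousAt))
  have hF := (hfA.integral_hasStrictDerivAt x₀ x).hasDerivAt
  have hE : HasDerivAt (fun x => exp (-A x)) (exp (-A x) * -a x) x := (hA x).neg.exp
  have hexp : exp (-A x) * exp (A x) = 1 := by rw [← exp_add, neg_add_cancel, exp_zero]
  simp only [integral_mul_exp_integral_eq ha]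
  exact (hE.mul hF).congr_deriv (by linear_combination f x * hexp)

theorem quadrature_solution_of_reciprocal_constraint
    (a b : ℝ → ℝ) (ha : Continuous a) (hb : ContDiff ℝ 1 b) (hbne : ∀ x : ℝ, b x ≠ 0)
    (c : ℝ → ℝ)
    (hc : ∀ x : ℝ, c x = (2/9) * b x * ∫ ξ in (0:ℝ)..x, b ξ * Real.exp (∫ y in x..ξ, a y)) :
    Differentiable ℝ c ∧
      ∀ x : ℝ, deriv c x + (a x - deriv b x / b x) * c x = (2/9) * (b x) ^ 2 := by
  set u : ℝ → ℝ := fun x => ∫ ξ in (0:ℝ)..x, b ξ * exp (∫ y in x..ξ, a y)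
  have hcu : c = fun x => (2/9) * b x * u x := funext hc
  have hc' : ∀ x, HasDerivAt c ((2/9) * deriv b x * u x + (2/9) * b x * (b x - a x * u x)) x := by
    intro x
    rw [hcu]
    exact (((hb.differentiable one_ne_zero x).hasDerivAt.const_mul (2/9)).mul
      (hasDerivAt_integral_mul_exp_integral ha hb.continuous 0 x))
  refine ⟨fun x => (hc' x).differentiableAt, fun x => ?_⟩
  rw [(hc' x).deriv, hcu]
  field_simp [hbne x]
  ring
end

section
/- Let ν be a real number with ν ≠ 1 and ν ≠ 2, and let a, c : ℝ → ℝ be continuous. Define F(x) = exp((2−ν)·∫₀ˣ a(ξ) dξ), G(x) = (2−ν)·(1−ν)·∫₀ˣ c(ξ)·F(ξ) dξ, and the Lagrangian L(x, v, t) = F(x)·v^{2−ν} − G(x) (with real powers of v defined for v > 0). Then a twice differentiable curve x : ℝ → ℝ with x'(t) > 0 for all t satisfies the Euler–Lagrange equation of L if and only if x''(t) + a(x(t))·x'(t)² + c(x(t))·x'(t)^ν = 0 for all t ∈ ℝ. -/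
open Real

theorem hasDerivAt_of_eq_exp_const_mul_integral {a F : ℝ → ℝ} (ha : Continuous a) {k : ℝ}
    (hF : ∀ x, F x = exp (k * ∫ ξ in (0:ℝ)..x, a ξ)) (y : ℝ) :
    HasDerivAt F (k * a y * F y) y := by
  rw [funext hF]
  convert ((ha.integral_hasStrictDerivAt 0 y).hasDerivAt.const_mul k).exp using 1
  ring

section MonomialLagrangian

variable {F G : ℝ → ℝ} {p : ℝ} {L : ℝ → ℝ → ℝ → ℝ}

theorem pv_eq_of_pos (hL : ∀ x t v : ℝ, 0 < v → L x v t = F x * v ^ p - G x)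
    {X v : ℝ} (t : ℝ) (hv : 0 < v) : pv L X v t = F X * (p * v ^ (p - 1)) := by
  have hL_near : (fun w => L X w t) =ᶠ[nhds v] fun w => F X * w ^ p - G X := by
    filter_upwards [eventually_gt_nhds hv] with w hw using hL X t w hw
  rw [pv, hL_near.deriv_eq]
  exact (((hasDerivAt_rpow_const (Or.inl hv.ne')).const_mul (F X)).sub_const (G X)).deriv

theorem px_eq_of_pos (hL : ∀ x t v : ℝ, 0 < v → L x v t = F x * v ^ p - G x)
    {X v F' G' : ℝ} (t : ℝ) (hv : 0 < v) (hF : HasDerivAt F F' X) (hG : HasDerivAt G G' X) :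
    px L X v t = F' * v ^ p - G' := by
  rw [px, funext fun y => hL y t v hv]
  exact ((hF.mul_const _).sub hG).deriv

variable {F' G' x : ℝ → ℝ}

theorem hasDerivAt_pv_of_pos (hL : ∀ x t v : ℝ, 0 < v → L x v t = F x * v ^ p - G x)
    (hF : ∀ y, HasDerivAt F (F' y) y) (hx : Differentiable ℝ x)
    (hx' : Differentiable ℝ (deriv x)) (hxpos : ∀ t, 0 < deriv x t) (t : ℝ) :
    HasDerivAt (fun s => pv L (x s) (deriv x s) s)
      (F' (x t) * deriv x t * (p * deriv x t ^ (p - 1))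
        + F (x t) * (p * (deriv (deriv x) t * (p - 1) * deriv x t ^ (p - 1 - 1)))) t := by
  rw [funext fun s => pv_eq_of_pos hL s (hxpos s)]
  exact ((hF (x t)).comp t (hx t).hasDerivAt).mul
    (((hx' t).hasDerivAt.rpow_const (Or.inl (hxpos t).ne')).const_mul p)

theorem satisfiesEL_iff_of_pos (hL : ∀ x t v : ℝ, 0 < v → L x v t = F x * v ^ p - G x)
    (hF : ∀ y, HasDerivAt F (F' y) y) (hG : ∀ y, HasDerivAt G (G' y) y)
    (hx : Differentiable ℝ x) (hx' : Differentiable ℝ (deriv x))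
    (hxpos : ∀ t, 0 < deriv x t) :
    SatisfiesEL L x ↔ ∀ t, (p - 1) * F' (x t) * deriv x t ^ p
      + p * (p - 1) * F (x t) * deriv x t ^ (p - 2) * deriv (deriv x) t + G' (x t) = 0 := by
  refine forall_congr' fun t => ?_
  have hu := hxpos t
  rw [(hasDerivAt_pv_of_pos hL hF hx hx' hxpos t).deriv,
    px_eq_of_pos hL t hu (hF (x t)) (hG (x t)), ← sub_eq_zero]
  have hpow : deriv x t * deriv x t ^ (p - 1) = deriv x t ^ p := by
    rw [rpow_sub_one hu.ne', mul_div_cancel₀ _ hu.ne']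
  rw [show p - 1 - 1 = p - 2 by ring]
  congr! 1
  linear_combination (p * F' (x t)) * hpow

end MonomialLagrangian

theorem mul_rpow_two_sub_add_eq_rpow_neg_mul (ν a c w : ℝ) {u : ℝ} (hu : 0 < u) :
    a * u ^ (2 - ν) + u ^ (-ν) * w + c = u ^ (-ν) * (w + a * u ^ 2 + c * u ^ ν) := by
  have h2 : u ^ (2 - ν) = u ^ (-ν) * u ^ 2 := by
    rw [sub_eq_neg_add, rpow_add hu, rpow_two]
  have hν : u ^ (-ν) * u ^ ν = 1 := by
    rw [← rpow_add hu, neg_add_cancel, rpow_zero]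
  rw [h2]
  linear_combination -c * hν

theorem monomial_lagrangian_autonomous
    (ν : ℝ) (hν1 : ν ≠ 1) (hν2 : ν ≠ 2)
    (a c : ℝ → ℝ) (ha : Continuous a) (hc : Continuous c)
    (F G : ℝ → ℝ)
    (hF : ∀ x : ℝ, F x = Real.exp ((2 - ν) * ∫ ξ in (0:ℝ)..x, a ξ))
    (hG : ∀ x : ℝ, G x = (2 - ν) * (1 - ν) * ∫ ξ in (0:ℝ)..x, c ξ * F ξ)
    (L : ℝ → ℝ → ℝ → ℝ)
    (hL : ∀ x t : ℝ, ∀ v : ℝ, 0 < v → L x v t = F x * v ^ (2 - ν) - G x)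
    (x : ℝ → ℝ) (hx : Differentiable ℝ x) (hx' : Differentiable ℝ (deriv x))
    (hxpos : ∀ t : ℝ, 0 < deriv x t) :
    SatisfiesEL L x ↔
      ∀ t : ℝ, deriv (deriv x) t + a (x t) * (deriv x t) ^ 2
        + c (x t) * (deriv x t) ^ ν = 0 := by
  have hFd := hasDerivAt_of_eq_exp_const_mul_integral ha hF
  have hFc : Continuous F := continuous_iff_continuousAt.mpr fun y => (hFd y).continuousAt
  have hGd (y : ℝ) : HasDerivAt G ((2 - ν) * (1 - ν) * (c y * F y)) y := by
    rw [funext hG]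
    exact ((hc.mul hFc).integral_hasStrictDerivAt 0 y).hasDerivAt.const_mul _
  rw [satisfiesEL_iff_of_pos hL hFd hGd hx hx' hxpos]
  refine forall_congr' fun t => ?_
  have hu := hxpos t
  have hprefactor : (2 - ν) * (1 - ν) * F (x t) ≠ 0 :=
    mul_ne_zero (mul_ne_zero (sub_ne_zero.mpr hν2.symm) (sub_ne_zero.mpr hν1.symm))
      (hF (x t) ▸ (exp_pos _).ne')
  have hresidual : (2 - ν - 1) * ((2 - ν) * a (x t) * F (x t)) * deriv x t ^ (2 - ν)
      + (2 - ν) * (2 - ν - 1) * F (x t) * deriv x t ^ (2 - ν - 2) * deriv (deriv x) t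
      + (2 - ν) * (1 - ν) * (c (x t) * F (x t))
      = (2 - ν) * (1 - ν) * F (x t) * (deriv x t ^ (-ν) * (deriv (deriv x) t
        + a (x t) * deriv x t ^ 2 + c (x t) * deriv x t ^ ν)) := by
    rw [← mul_rpow_two_sub_add_eq_rpow_neg_mul ν _ _ _ hu, show 2 - ν - 2 = -ν by ring]
    ring
  rw [hresidual, mul_eq_zero_iff_left hprefactor,
    mul_eq_zero_iff_left (rpow_pos_of_pos hu _).ne']
end

section
/- Let R : ℝ → ℝ be continuous with R(v) ≠ 0 for all v, let f : ℝ × ℝ → ℝ be a continuous function of (x, t), let Ψ : ℝ → ℝ be twice differentiable with Ψ''(v) = 1/R(v) for all v, and let G : ℝ × ℝ → ℝ be differentiable in x with Gₓ(x, t) = f(x, t). Define the Lagrangian L(x, v, t) = Ψ(v) + G(x, t). Then a twice differentiable curve x : ℝ → ℝ satisfies the Euler–Lagrange equation of L if and only if x''(t) = f(x(t), t)·R(x'(t)) for all t ∈ ℝ. -/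
theorem modified_kinetic_term_lagrangian
    (R : ℝ → ℝ) (hR : Continuous R) (hRne : ∀ v : ℝ, R v ≠ 0)
    (f : ℝ × ℝ → ℝ) (hf : Continuous f)
    (Ψ : ℝ → ℝ) (hΨ : Differentiable ℝ Ψ) (hΨ' : Differentiable ℝ (deriv Ψ))
    (hΨ'' : ∀ v : ℝ, deriv (deriv Ψ) v = 1 / R v)
    (G : ℝ × ℝ → ℝ)
    (hG : ∀ x t : ℝ, HasDerivAt (fun y => G (y, t)) (f (x, t)) x)
    (L : ℝ → ℝ → ℝ → ℝ) (hL : ∀ x v t : ℝ, L x v t = Ψ v + G (x, t))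
    (x : ℝ → ℝ) (hx : Differentiable ℝ x) (hx' : Differentiable ℝ (deriv x)) :
    SatisfiesEL L x ↔
      ∀ t : ℝ, deriv (deriv x) t = f (x t, t) * R (deriv x t) := by
  have hpv : ∀ a v t : ℝ, pv L a v t = deriv Ψ v := by
    intro a v t
    unfold pv
    simp only [hL]
    exact deriv_add_const _
  have hpx : ∀ a v t : ℝ, px L a v t = f (a, t) := by
    intro a v t
    unfold px
    simp only [hL]
    rw [deriv_const_add]
    exact (hG a t).deriv
  have key : ∀ t : ℝ, deriv (fun s => pv L (x s) (deriv x s) s) t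
      = 1 / R (deriv x t) * deriv (deriv x) t := by
    intro t
    simp only [hpv]
    have h : HasDerivAt (fun s => deriv Ψ (deriv x s))
        (deriv (deriv Ψ) (deriv x t) * deriv (deriv x) t) t :=
      (hΨ' (deriv x t)).hasDerivAt.comp t (hx' t).hasDerivAt
    rw [h.deriv, hΨ'']
  constructor
  · intro h t
    have := h t
    rw [key, hpx] at this
    rw [one_div, inv_mul_eq_div, div_eq_iff (hRne _)] at this
    exact this
  · intro h t
    rw [key, hpx, h t]
    rw [one_div, inv_mul_eq_div, mul_div_assoc, div_self (hRne _), mul_one]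
end

section
/- Let f : ℝ × ℝ → ℝ be a continuous function of (x, t) and define the Lagrangian L(x, v, t) = v·log v + ∫₀ˣ f(ξ, t) dξ for v > 0 (extended arbitrarily for v ≤ 0). Then a twice differentiable curve x : ℝ → ℝ with x'(t) > 0 for all t satisfies the Euler–Lagrange equation of L if and only if x''(t) = x'(t)·f(x(t), t) for all t ∈ ℝ. -/
theorem vlogv_lagrangian
    (f : ℝ × ℝ → ℝ) (hf : Continuous f)
    (L : ℝ → ℝ → ℝ → ℝ)
    (hL : ∀ x t : ℝ, ∀ v : ℝ, 0 < v →
      L x v t = v * Real.log v + ∫ ξ in (0:ℝ)..x, f (ξ, t))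
    (x : ℝ → ℝ) (hx : Differentiable ℝ x) (hx' : Differentiable ℝ (deriv x))
    (hxpos : ∀ t : ℝ, 0 < deriv x t) :
    SatisfiesEL L x ↔
      ∀ t : ℝ, deriv (deriv x) t = deriv x t * f (x t, t) := by
  have hpv : ∀ a t v : ℝ, 0 < v → pv L a v t = Real.log v + 1 := by
    intro a t v hv
    have heq : (fun w => L a w t) =ᶠ[nhds v]
        (fun w => w * Real.log w + ∫ ξ in (0:ℝ)..a, f (ξ, t)) := by
      filter_upwards [isOpen_Ioi.mem_nhds hv] with w hw
      exact hL a t w hw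
    have hD : HasDerivAt (fun w => w * Real.log w + ∫ ξ in (0:ℝ)..a, f (ξ, t))
        (Real.log v + 1) v :=
      (Real.hasDerivAt_mul_log hv.ne').add_const _
    rw [pv, heq.deriv_eq]
    exact hD.deriv
  have hpx : ∀ a t v : ℝ, 0 < v → px L a v t = f (a, t) := by
    intro a t v hv
    have heq : (fun y => L y v t) =
        (fun y => v * Real.log v + ∫ ξ in (0:ℝ)..y, f (ξ, t)) := by
      funext y; exact hL y t v hv
    have hcont : Continuous fun ξ => f (ξ, t) :=
      hf.comp (continuous_id.prodMk continuous_const)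
    rw [px, heq, deriv_const_add]
    exact hcont.deriv_integral _ 0 a
  have hLHS : ∀ t : ℝ, deriv (fun s => pv L (x s) (deriv x s) s) t
      = deriv (deriv x) t / deriv x t := by
    intro t
    have heq : (fun s => pv L (x s) (deriv x s) s)
        = (fun s => Real.log (deriv x s) + 1) := by
      funext s; exact hpv (x s) s (deriv x s) (hxpos s)
    have hD : HasDerivAt (fun s => Real.log (deriv x s) + 1)
        (deriv (deriv x) t / deriv x t) t :=
      (((hx' t).hasDerivAt).log (hxpos t).ne').add_const 1
    rw [heq, hD.deriv]
  constructor
  · intro h t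
    have := h t
    rw [hLHS t, hpx (x t) t (deriv x t) (hxpos t)] at this
    rw [div_eq_iff (hxpos t).ne'] at this
    linarith
  · intro h t
    rw [hLHS t, hpx (x t) t (deriv x t) (hxpos t),
      div_eq_iff (hxpos t).ne', h t, mul_comm]
end

section
/- Let μ be a real number with μ ≠ 0 and μ ≠ 1, and let a, b : ℝ → ℝ be continuous. Define A(t) = exp((μ−1)·∫₀ᵗ a(τ) dτ) and B(t) = −(∫₀ᵗ b(τ)·exp(−∫₀^τ a(y) dy) dτ)·exp(μ·∫₀ᵗ a(τ) dτ), and the radical Lagrangian L(x, v, t) = (A(t)·v + B(t))^{1/μ} (with the real power defined for a positive base). Then a twice differentiable curve x : ℝ → ℝ with A(t)·x'(t) + B(t) > 0 for all t satisfies the Euler–Lagrange equation of L if and only if x''(t) = a(t)·x'(t) + b(t) for all t ∈ ℝ. -/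
/-!
The Lagrangian does not depend on the position, so the Euler–Lagrange equation says that the
momentum `∂L/∂v = (A / μ) (A x' + B) ^ (1 / μ - 1)` is constant. The coefficients solve
`A' = (μ - 1) a A` and `B' = μ a B - b A`, and with these the time derivative of the momentum is
`(1 - μ) / μ ^ 2 · A ^ 2 (A x' + B) ^ (1 / μ - 2) · (x'' - a x' - b)`, whose prefactor never vanishes.
-/

open Real

noncomputable def radicalCoeffA (μ : ℝ) (a : ℝ → ℝ) (t : ℝ) : ℝ :=
  exp ((μ - 1) * ∫ τ in (0:ℝ)..t, a τ)

noncomputable def radicalCoeffB (μ : ℝ) (a b : ℝ → ℝ) (t : ℝ) : ℝ :=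
  -(∫ τ in (0:ℝ)..t, b τ * exp (-∫ y in (0:ℝ)..τ, a y)) * exp (μ * ∫ τ in (0:ℝ)..t, a τ)

section Coefficients

variable {μ : ℝ} {a b : ℝ → ℝ}

theorem radicalCoeffA_pos (t : ℝ) : 0 < radicalCoeffA μ a t := exp_pos _

theorem hasDerivAt_radicalCoeffA (ha : Continuous a) (t : ℝ) :
    HasDerivAt (radicalCoeffA μ a) ((μ - 1) * a t * radicalCoeffA μ a t) t := by
  refine ((ha.integral_hasStrictDerivAt 0 t).hasDerivAt.const_mul (μ - 1)).exp.congr_deriv ?_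
  rw [radicalCoeffA]
  ring

theorem hasDerivAt_radicalCoeffB (ha : Continuous a) (hb : Continuous b) (t : ℝ) :
    HasDerivAt (radicalCoeffB μ a b)
      (μ * a t * radicalCoeffB μ a b t - b t * radicalCoeffA μ a t) t := by
  have hI := fun s => (ha.integral_hasStrictDerivAt 0 s).hasDerivAt
  have hIc : Continuous fun s => ∫ y in (0:ℝ)..s, a y :=
    continuous_iff_continuousAt.2 fun s => (hI s).continuousAt
  have hJ := ((hb.mul hIc.neg.rexp).integral_hasStrictDerivAt 0 t).hasDerivAt
  refine (hJ.neg.mul ((hI t).const_mul μ).exp).congr_deriv ?_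
  simp only [Pi.mul_apply, Pi.neg_apply]
  rw [radicalCoeffB, radicalCoeffA, show (μ - 1) * (∫ y in (0:ℝ)..t, a y)
    = -(∫ y in (0:ℝ)..t, a y) + μ * ∫ y in (0:ℝ)..t, a y by ring, exp_add]
  ring

end Coefficients

theorem px_eq_zero_of_forall_eq {L : ℝ → ℝ → ℝ → ℝ} {x v t c : ℝ} (h : ∀ y, L y v t = c) :
    px L x v t = 0 := by
  rw [px, funext h, deriv_const]

theorem pv_eq_of_rpow {L : ℝ → ℝ → ℝ → ℝ} {μ α β x v t : ℝ}
    (hL : ∀ w, 0 < α * w + β → L x w t = (α * w + β) ^ (1 / μ)) (hpos : 0 < α * v + β) :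
    pv L x v t = α * (1 / μ * (α * v + β) ^ (1 / μ - 1)) := by
  have hlin : HasDerivAt (fun w => α * w + β) α v := by
    simpa using ((hasDerivAt_id v).const_mul α).add_const β
  have hev : (fun w => L x w t) =ᶠ[nhds v] fun w => (α * w + β) ^ (1 / μ) := by
    filter_upwards [hlin.continuousAt.eventually (eventually_gt_nhds hpos)] with w hw
    exact hL w hw
  rw [pv, hev.deriv_eq, (hlin.rpow_const (Or.inl hpos.ne')).deriv]
  ring

theorem hasDerivAt_radical_momentum {μ α β w t : ℝ} {A B v : ℝ → ℝ} (hμ : μ ≠ 0)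
    (hA : HasDerivAt A ((μ - 1) * α * A t) t) (hB : HasDerivAt B (μ * α * B t - β * A t) t)
    (hv : HasDerivAt v w t) (hpos : 0 < A t * v t + B t) :
    HasDerivAt (fun s => A s * (1 / μ * (A s * v s + B s) ^ (1 / μ - 1)))
      ((1 - μ) / μ ^ 2 * A t ^ 2 * (A t * v t + B t) ^ (1 / μ - 2) * (w - (α * v t + β))) t := by
  have hu := ((hA.mul hv).add hB).rpow_const (p := 1 / μ - 1) (Or.inl hpos.ne')
  refine (hA.mul (hu.const_mul (1 / μ))).congr_deriv ?_
  have hpow : (A t * v t + B t) ^ (1 / μ - 1)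
      = (A t * v t + B t) ^ (1 / μ - 2) * (A t * v t + B t) := by
    rw [← rpow_add_one hpos.ne']
    ring_nf
  simp only [Pi.add_apply, Pi.mul_apply]
  rw [show (1 / μ - 1 - 1 : ℝ) = 1 / μ - 2 by ring, hpow]
  field_simp
  ring

theorem radical_lagrangian_linear_velocity_general
    (μ : ℝ) (hμ0 : μ ≠ 0) (hμ1 : μ ≠ 1)
    (a b : ℝ → ℝ) (ha : Continuous a) (hb : Continuous b)
    (A B : ℝ → ℝ)
    (hA : ∀ t : ℝ, A t = Real.exp ((μ - 1) * ∫ τ in (0:ℝ)..t, a τ))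
    (hB : ∀ t : ℝ, B t =
      -(∫ τ in (0:ℝ)..t, b τ * Real.exp (-∫ y in (0:ℝ)..τ, a y)) *
        Real.exp (μ * ∫ τ in (0:ℝ)..t, a τ))
    (L : ℝ → ℝ → ℝ → ℝ)
    (hL : ∀ x t : ℝ, ∀ v : ℝ, 0 < A t * v + B t → L x v t = (A t * v + B t) ^ (1 / μ))
    (x : ℝ → ℝ) (hx' : Differentiable ℝ (deriv x))
    (hpos : ∀ t : ℝ, 0 < A t * deriv x t + B t) :
    SatisfiesEL L x ↔
      ∀ t : ℝ, deriv (deriv x) t = a t * deriv x t + b t := by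
  obtain rfl : A = radicalCoeffA μ a := funext hA
  obtain rfl : B = radicalCoeffB μ a b := funext hB
  have hmomentum : (fun s => pv L (x s) (deriv x s) s) = fun s =>
      radicalCoeffA μ a s * (1 / μ * (radicalCoeffA μ a s * deriv x s + radicalCoeffB μ a b s)
        ^ (1 / μ - 1)) :=
    funext fun s => pv_eq_of_rpow (hL (x s) s) (hpos s)
  refine forall_congr' fun t => ?_
  have hfactor : (1 - μ) / μ ^ 2 * radicalCoeffA μ a t ^ 2 *
      (radicalCoeffA μ a t * deriv x t + radicalCoeffB μ a b t) ^ (1 / μ - 2) ≠ 0 :=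
    mul_ne_zero (mul_ne_zero (div_ne_zero (sub_ne_zero.2 hμ1.symm) (pow_ne_zero 2 hμ0))
      (pow_ne_zero 2 (radicalCoeffA_pos t).ne')) (rpow_pos_of_pos (hpos t) _).ne'
  rw [hmomentum, px_eq_zero_of_forall_eq fun y => hL y t _ (hpos t),
    (hasDerivAt_radical_momentum hμ0 (hasDerivAt_radicalCoeffA ha t)
      (hasDerivAt_radicalCoeffB ha hb t) (hx' t).hasDerivAt (hpos t)).deriv,
    mul_eq_zero, or_iff_right hfactor, sub_eq_zero]

theorem radical_lagrangian_linear_velocity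
    (μ : ℝ) (hμ0 : μ ≠ 0) (hμ1 : μ ≠ 1)
    (a b : ℝ → ℝ) (ha : Continuous a) (hb : Continuous b)
    (A B : ℝ → ℝ)
    (hA : ∀ t : ℝ, A t = Real.exp ((μ - 1) * ∫ τ in (0:ℝ)..t, a τ))
    (hB : ∀ t : ℝ, B t =
      -(∫ τ in (0:ℝ)..t, b τ * Real.exp (-∫ y in (0:ℝ)..τ, a y)) *
        Real.exp (μ * ∫ τ in (0:ℝ)..t, a τ))
    (L : ℝ → ℝ → ℝ → ℝ)
    (hL : ∀ x t : ℝ, ∀ v : ℝ, 0 < A t * v + B t → L x v t = (A t * v + B t) ^ (1 / μ))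
    (x : ℝ → ℝ) (hx : Differentiable ℝ x) (hx' : Differentiable ℝ (deriv x))
    (hpos : ∀ t : ℝ, 0 < A t * deriv x t + B t) :
    SatisfiesEL L x ↔
      ∀ t : ℝ, deriv (deriv x) t = a t * deriv x t + b t :=
  radical_lagrangian_linear_velocity_general μ hμ0 hμ1 a b ha hb A B hA hB L hL x hx' hpos
end

section
/- Let L : ℝ → ℝ → ℝ → ℝ be a continuously differentiable Lagrangian in the arguments (x, v, t), let F : ℝ → ℝ be twice differentiable, and let x : ℝ → ℝ be a twice differentiable curve along which L is an invariant of motion, i.e., the function t ↦ L(x(t), x'(t), t) is constant. If x satisfies the Euler–Lagrange equation of L, then x satisfies the Euler–Lagrange equation of the Lagrangian F∘L, i.e., of (x, v, t) ↦ F(L(x, v, t)). Conversely, if in addition F'(L(x(t), x'(t), t)) ≠ 0 for all t and x satisfies the Euler–Lagrange equation of F∘L, then x satisfies the Euler–Lagrange equation of L. -/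
/-!
Along the curve the Lagrangian takes a constant value `c`. By the chain rule both partial
derivatives of `F ∘ L` are those of `L` multiplied by `F'(L)`, which along the curve is the
constant `F'(c)`; hence it comes out of the time derivative, and the Euler–Lagrange equation of
`F ∘ L` is that of `L` multiplied by `F'(c)`.
-/

section Lagrangian

variable {L : ℝ → ℝ → ℝ → ℝ} {F : ℝ → ℝ}

theorem differentiableAt_velocity_of_differentiable
    (hL : Differentiable ℝ (fun p : ℝ × ℝ × ℝ => L p.1 p.2.1 p.2.2)) (X V T : ℝ) :
    DifferentiableAt ℝ (fun w => L X w T) V :=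
  (hL.comp ((differentiable_const X).prodMk
    (differentiable_id.prodMk (differentiable_const T)))).differentiableAt

theorem differentiableAt_position_of_differentiable
    (hL : Differentiable ℝ (fun p : ℝ × ℝ × ℝ => L p.1 p.2.1 p.2.2)) (X V T : ℝ) :
    DifferentiableAt ℝ (fun y => L y V T) X :=
  (hL.comp (differentiable_id.prodMk
    ((differentiable_const V).prodMk (differentiable_const T)))).differentiableAt

theorem pv_comp {X V T : ℝ} (hF : DifferentiableAt ℝ F (L X V T))
    (hL : DifferentiableAt ℝ (fun w => L X w T) V) :
    pv (fun y v t => F (L y v t)) X V T = deriv F (L X V T) * pv L X V T :=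
  deriv_comp V hF hL

theorem px_comp {X V T : ℝ} (hF : DifferentiableAt ℝ F (L X V T))
    (hL : DifferentiableAt ℝ (fun y => L y V T) X) :
    px (fun y v t => F (L y v t)) X V T = deriv F (L X V T) * px L X V T :=
  deriv_comp X hF hL

theorem satisfiesEL_comp_iff_of_invariant
    (hL : Differentiable ℝ (fun p : ℝ × ℝ × ℝ => L p.1 p.2.1 p.2.2)) {c : ℝ}
    (hF : DifferentiableAt ℝ F c) {x : ℝ → ℝ} (hc : ∀ t, L (x t) (deriv x t) t = c) :
    SatisfiesEL (fun y v t => F (L y v t)) x ↔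
      ∀ t, deriv F c * deriv (fun s => pv L (x s) (deriv x s) s) t
        = deriv F c * px L (x t) (deriv x t) t := by
  have hpv : (fun s => pv (fun y v t => F (L y v t)) (x s) (deriv x s) s)
      = fun s => deriv F c * pv L (x s) (deriv x s) s := by
    funext s
    rw [pv_comp (hc s ▸ hF) (differentiableAt_velocity_of_differentiable hL _ _ _), hc]
  have hpx (t : ℝ) : px (fun y v t => F (L y v t)) (x t) (deriv x t) t
      = deriv F c * px L (x t) (deriv x t) t := by
    rw [px_comp (hc t ▸ hF) (differentiableAt_position_of_differentiable hL _ _ _), hc]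
  simp only [SatisfiesEL, hpv, hpx, deriv_const_mul_field]

end Lagrangian

theorem composed_lagrangian_of_invariant_general
    (L : ℝ → ℝ → ℝ → ℝ)
    (hL : ContDiff ℝ 1 (fun p : ℝ × ℝ × ℝ => L p.1 p.2.1 p.2.2))
    (F : ℝ → ℝ) (hF : Differentiable ℝ F)
    (x : ℝ → ℝ)
    (hinv : ∀ s t : ℝ, L (x s) (deriv x s) s = L (x t) (deriv x t) t) :
    (SatisfiesEL L x → SatisfiesEL (fun y v t => F (L y v t)) x) ∧
    ((∀ t : ℝ, deriv F (L (x t) (deriv x t) t) ≠ 0) →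
      SatisfiesEL (fun y v t => F (L y v t)) x → SatisfiesEL L x) := by
  set c := L (x 0) (deriv x 0) 0
  have hEL := satisfiesEL_comp_iff_of_invariant (hL.differentiable one_ne_zero) (hF c)
    (fun t => hinv t 0)
  refine ⟨fun h => hEL.2 fun t => by rw [h t], fun hne h t => ?_⟩
  exact mul_left_cancel₀ (hne 0) (hEL.1 h t)

theorem composed_lagrangian_of_invariant
    (L : ℝ → ℝ → ℝ → ℝ)
    (hL : ContDiff ℝ 1 (fun p : ℝ × ℝ × ℝ => L p.1 p.2.1 p.2.2))
    (F : ℝ → ℝ) (hF : Differentiable ℝ F) (hF' : Differentiable ℝ (deriv F))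
    (x : ℝ → ℝ) (hx : Differentiable ℝ x) (hx' : Differentiable ℝ (deriv x))
    (hinv : ∀ s t : ℝ, L (x s) (deriv x s) s = L (x t) (deriv x t) t) :
    (SatisfiesEL L x → SatisfiesEL (fun y v t => F (L y v t)) x) ∧
    ((∀ t : ℝ, deriv F (L (x t) (deriv x t) t) ≠ 0) →
      SatisfiesEL (fun y v t => F (L y v t)) x → SatisfiesEL L x) :=
  composed_lagrangian_of_invariant_general L hL F hF x hinv
end
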